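/- Let p be a prime, q a power of p, f, g ∈ F_q[T], and let W_n be defined by W_0 = 0, W_1 = 1, W_n = f·W_{n-1} + g·W_{n-2}, and w_n by w_0 = 2, w_1 = f, w_n = f·w_{n-1} + g·w_{n-2}. Then for n = p^k·m, W_n = W_{p^k}·W_m^{p^k} and w_n = w_m^{p^k} in F_q[T]. -/

import Mathlib

open Polynomial

noncomputable def lucasW {R : Type*} [CommRing R] (f g : Polynomial R) : ℕ → Polynomial R
  | 0 => 0
  | 1 => 1
  | n + 2 => f * lucasW f g (n + 1) + g * lucasW f g n

noncomputable def lucasw {R : Type*} [CommRing R] (f g : Polynomial R) : ℕ → Polynomial R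
  | 0 => 2
  | 1 => f
  | n + 2 => f * lucasw f g (n + 1) + g * lucasw f g n

/-!
Adjoin to `R[X]` a root `α` of `Y² - f Y - g`; the other root is `β = f - α`. Induction on `n`
gives `αⁿ⁺¹ = W_{n+1} α + g W_n` and `w_n = αⁿ + βⁿ`, and `1, α` are linearly independent over
`R[X]`. In characteristic `p` the Frobenius map is additive, so `w_{pm} = (αᵐ + βᵐ)ᵖ = w_mᵖ`,
while `α^{pm} = (W_m α + d)ᵖ = W_mᵖ αᵖ + dᵖ` has `α`-coefficient `W_mᵖ W_p`, i.e. `W_{pm} = W_p W_mᵖ`.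
Iterating over `k` handles `pᵏ`.
-/

theorem pow_add_two_of_sq_eq {A : Type*} [CommRing A] {x a b : A} (h : x ^ 2 = a * x + b)
    (n : ℕ) : x ^ (n + 2) = a * x ^ (n + 1) + b * x ^ n := by
  rw [pow_add, h]; ring

theorem AdjoinRoot.eq_and_eq_of_of_mul_root_add_eq {S : Type*} [CommRing S] {P : S[X]}
    (hP : P.Monic) (hdeg : 2 ≤ P.natDegree) {c d c' d' : S}
    (h : of P c * root P + of P d = of P c' * root P + of P d') : c = c' ∧ d = d' := by
  have : Nontrivial S := nontrivial_iff.mp (nontrivial_of_ne _ _ (ne_zero_of_natDegree_gt hdeg))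
  have hlin (c d : S) : modByMonicHom hP (of P c * root P + of P d) = C c * X + C d := by
    rw [← mk_C, ← mk_C, ← mk_X, ← map_mul, ← map_add, modByMonicHom_mk,
      modByMonic_eq_self_iff hP, degree_eq_natDegree hP.ne_zero]
    exact (degree_linear_le).trans_lt (by exact_mod_cast hdeg)
  have hcd := congrArg (modByMonicHom hP) h
  rw [hlin, hlin] at hcd
  exact ⟨by simpa using congrArg (coeff · 1) hcd, by simpa using congrArg (coeff · 0) hcd⟩

section Algebra

variable {R A : Type*} [CommRing R] [CommRing A] [Algebra R[X] A] {f g : R[X]} {α : A}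

theorem pow_succ_eq_lucasW (hα : α ^ 2 = algebraMap R[X] A f * α + algebraMap R[X] A g)
    (n : ℕ) : α ^ (n + 1) =
      algebraMap R[X] A (lucasW f g (n + 1)) * α + algebraMap R[X] A (g * lucasW f g n) := by
  induction n with
  | zero => simp [lucasW]
  | succ n ih =>
    rw [pow_succ, ih]
    simp only [lucasW, map_add, map_mul]
    linear_combination algebraMap R[X] A (lucasW f g (n + 1)) * hα

theorem exists_pow_eq_lucasW (hα : α ^ 2 = algebraMap R[X] A f * α + algebraMap R[X] A g)
    {n : ℕ} (hn : n ≠ 0) :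
    ∃ d, α ^ n = algebraMap R[X] A (lucasW f g n) * α + algebraMap R[X] A d := by
  obtain ⟨n, rfl⟩ := Nat.exists_eq_succ_of_ne_zero hn
  exact ⟨_, pow_succ_eq_lucasW hα n⟩

theorem pow_add_pow_eq_lucasw (hα : α ^ 2 = algebraMap R[X] A f * α + algebraMap R[X] A g)
    (n : ℕ) : α ^ n + (algebraMap R[X] A f - α) ^ n = algebraMap R[X] A (lucasw f g n) := by
  have hβ : (algebraMap R[X] A f - α) ^ 2 =
      algebraMap R[X] A f * (algebraMap R[X] A f - α) + algebraMap R[X] A g := by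
    linear_combination hα
  induction n using Nat.twoStepInduction with
  | zero => rw [lucasw, map_ofNat, pow_zero, pow_zero, one_add_one_eq_two]
  | one => simp [lucasw]
  | more n ih₀ ih₁ =>
    rw [pow_add_two_of_sq_eq hα, pow_add_two_of_sq_eq hβ, lucasw, map_add, map_mul, map_mul,
      ← ih₀, ← ih₁]
    ring

end Algebra

section CharPoly

variable {R : Type*} [CommRing R] (f g : R[X])

noncomputable def lucasCharPoly : R[X][X] := X ^ 2 - C f * X - C g

theorem lucasCharPoly_monic [Nontrivial R] : (lucasCharPoly f g).Monic := by
  unfold lucasCharPoly; monicity!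

theorem lucasCharPoly_natDegree [Nontrivial R] : (lucasCharPoly f g).natDegree = 2 := by
  unfold lucasCharPoly; compute_degree!

theorem lucasCharPoly_root_sq :
    AdjoinRoot.root (lucasCharPoly f g) ^ 2 =
      algebraMap R[X] _ f * AdjoinRoot.root (lucasCharPoly f g) + algebraMap R[X] _ g := by
  have h : eval₂ (AdjoinRoot.of (lucasCharPoly f g)) (AdjoinRoot.root _) (X ^ 2 - C f * X - C g)
      = 0 := AdjoinRoot.eval₂_root _
  simp only [eval₂_sub, eval₂_mul, eval₂_pow, eval₂_X, eval₂_C] at h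
  rw [AdjoinRoot.algebraMap_eq]
  linear_combination h

theorem lucasCharPoly_eq_and_eq_of_algebraMap_mul_root_add_eq [Nontrivial R] {c d c' d' : R[X]}
    (h : algebraMap R[X] _ c * AdjoinRoot.root (lucasCharPoly f g) + algebraMap R[X] _ d =
      algebraMap R[X] _ c' * AdjoinRoot.root (lucasCharPoly f g) + algebraMap R[X] _ d') :
    c = c' ∧ d = d' :=
  AdjoinRoot.eq_and_eq_of_of_mul_root_add_eq (lucasCharPoly_monic f g)
    (lucasCharPoly_natDegree f g).ge h

theorem lucasCharPoly_algebraMap_injective [Nontrivial R] :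
    Function.Injective (algebraMap R[X] (AdjoinRoot (lucasCharPoly f g))) := fun a b hab ↦
  (lucasCharPoly_eq_and_eq_of_algebraMap_mul_root_add_eq f g (c := 0) (c' := 0)
    (by rw [hab])).2

theorem charP_adjoinRoot_lucasCharPoly (p : ℕ) [hp : Fact p.Prime] [CharP R p] :
    CharP (AdjoinRoot (lucasCharPoly f g)) p :=
  have : Nontrivial R := CharP.nontrivial_of_char_ne_one hp.out.one_lt.ne'
  charP_of_injective_algebraMap (lucasCharPoly_algebraMap_injective f g) p

end CharPoly

section CharP

variable (p : ℕ) [hp : Fact p.Prime] {R : Type*} [CommRing R] [CharP R p] (f g : R[X])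

theorem lucasw_prime_mul (m : ℕ) : lucasw f g (p * m) = lucasw f g m ^ p := by
  have : Nontrivial R := CharP.nontrivial_of_char_ne_one hp.out.one_lt.ne'
  have := charP_adjoinRoot_lucasCharPoly f g p
  apply lucasCharPoly_algebraMap_injective f g
  rw [map_pow, ← pow_add_pow_eq_lucasw (lucasCharPoly_root_sq f g),
    ← pow_add_pow_eq_lucasw (lucasCharPoly_root_sq f g), pow_mul', pow_mul', add_pow_char]

theorem lucasW_prime_mul (m : ℕ) : lucasW f g (p * m) = lucasW f g p * lucasW f g m ^ p := by
  have hp0 := hp.out.ne_zero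
  rcases eq_or_ne m 0 with rfl | hm
  · simp [lucasW, hp0]
  have : Nontrivial R := CharP.nontrivial_of_char_ne_one hp.out.one_lt.ne'
  have := charP_adjoinRoot_lucasCharPoly f g p
  have hα := lucasCharPoly_root_sq f g
  obtain ⟨d, hd⟩ := exists_pow_eq_lucasW hα hm
  obtain ⟨e, he⟩ := exists_pow_eq_lucasW hα hp0
  obtain ⟨d', hd'⟩ := exists_pow_eq_lucasW hα (mul_ne_zero hp0 hm)
  refine (lucasCharPoly_eq_and_eq_of_algebraMap_mul_root_add_eq f g
    (d := d') (d' := lucasW f g m ^ p * e + d ^ p) ?_).1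
  rw [← hd', pow_mul', hd, add_pow_char, mul_pow, he]
  simp only [map_add, map_mul, map_pow]
  ring

theorem lucasw_prime_pow_mul (k m : ℕ) : lucasw f g (p ^ k * m) = lucasw f g m ^ p ^ k := by
  induction k with
  | zero => simp
  | succ k ih => rw [pow_succ', mul_assoc, lucasw_prime_mul, ih, ← pow_mul, mul_comm]

theorem lucasW_prime_pow_mul (k m : ℕ) :
    lucasW f g (p ^ k * m) = lucasW f g (p ^ k) * lucasW f g m ^ p ^ k := by
  induction k with
  | zero => simp [lucasW]
  | succ k ih =>
    rw [pow_succ', mul_assoc, lucasW_prime_mul, ih, lucasW_prime_mul]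
    ring

end CharP

theorem lucas_seq_prime_pow_factor_general (p : ℕ) [Fact p.Prime]
    (F : Type*) [Field F] [CharP F p] (f g : Polynomial F) (k m : ℕ) :
    lucasW f g (p ^ k * m) = lucasW f g (p ^ k) * (lucasW f g m) ^ (p ^ k) ∧
      lucasw f g (p ^ k * m) = (lucasw f g m) ^ (p ^ k) :=
  ⟨lucasW_prime_pow_mul p f g k m, lucasw_prime_pow_mul p f g k m⟩

theorem lucas_seq_prime_pow_factor (p : ℕ) [Fact p.Prime]
    (F : Type*) [Field F] [Fintype F] [CharP F p] (f g : Polynomial F) (k m : ℕ) :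
    lucasW f g (p ^ k * m) = lucasW f g (p ^ k) * (lucasW f g m) ^ (p ^ k) ∧
      lucasw f g (p ^ k * m) = (lucasw f g m) ^ (p ^ k) :=
  lucas_seq_prime_pow_factor_general p F f g k m
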